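/- arXiv:1805.01621 — 3 statements merged into one kernel-verified Lean document; each statement's English description precedes it below -/
import Mathlib

section
/- Let $\mathfrak{g}$ be a Kac–Moody Lie algebra with Chevalley generators $e_i, f_i, h_i$ and symmetric relation $a_{ij} = a_{ji} = -1$. Then the automorphisms $T_i = \exp(\mathrm{ad}\,e_i)\exp(\mathrm{ad}(-f_i))\exp(\mathrm{ad}\,e_i)$ satisfy the braid relation $T_i T_j T_i = T_j T_i T_j$. If instead $a_{ij} = a_{ji} = 0$, then $T_i T_j = T_j T_i$. -/
/-! The exponential `T` of a locally nilpotent `ad x` is a Lie algebra endomorphism: by the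
Leibniz rule, `T ⁅a, b⁆` and `⁅T a, T b⁆` are the same finite double sum
`∑ (i! j!)⁻¹ ⁅(ad x)^i a, (ad x)^j b⁆`. Any Lie homomorphism `φ` intertwines `exp (ad x)` with
`exp (ad (φ x))`, so `φ T_i = T_j φ` as soon as `φ e_i = e_j` and `φ f_i = f_j`.
For `a_ij = a_ji = -1` an explicit computation inside the span of `e_i, e_j, ⁅e_j, e_i⁆` (resp.
`f_i, f_j, ⁅f_i, f_j⁆`) shows that `φ = T_i T_j` does this, whence `T_i T_j T_i = T_j T_i T_j`.
For `a_ij = a_ji = 0`, `T_j` fixes `e_i` and `f_i`, hence commutes with `T_i`. -/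

/-- `T` is the exponential of the (locally nilpotent) adjoint action of `x`. -/
def IsExpAd {L : Type} [LieRing L] [LieAlgebra ℂ L] (x : L) (T : L → L) : Prop :=
  ∀ (y : L) (n : ℕ), ((LieAlgebra.ad ℂ L x) ^ n) y = 0 →
    T y = ∑ k ∈ Finset.range n, ((k.factorial : ℂ))⁻¹ • ((LieAlgebra.ad ℂ L x) ^ k) y

open Finset LieAlgebra

theorem lie_eq_zero_comm {L : Type*} [LieRing L] {x y : L} : ⁅x, y⁆ = 0 ↔ ⁅y, x⁆ = 0 := by
  rw [← lie_skew, neg_eq_zero]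

theorem Finset.sum_range_sum_antidiagonal_eq_sum_product {M : Type*} [AddCommMonoid M]
    {g : ℕ × ℕ → M} {n m N : ℕ} (hN : n + m ≤ N)
    (hg : ∀ p : ℕ × ℕ, (n ≤ p.1 ∨ m ≤ p.2) → g p = 0) :
    ∑ k ∈ range N, ∑ p ∈ antidiagonal k, g p = ∑ p ∈ range n ×ˢ range m, g p := by
  rw [sum_sigma']
  refine sum_bij_ne_zero (fun q _ _ => q.2) ?_ ?_ ?_ ?_
  · rintro ⟨k, i, j⟩ - hq
    simp only [mem_product, mem_range]
    by_contra h
    exact hq (hg (i, j) (by simp only at h ⊢; omega))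
  · rintro ⟨k, p⟩ hp - ⟨k', p'⟩ hp' - rfl
    simp only [mem_sigma, HasAntidiagonal.mem_antidiagonal] at hp hp'
    rw [← hp.2, ← hp'.2]
  · rintro ⟨i, j⟩ hp hne
    simp only [mem_product, mem_range] at hp
    refine ⟨⟨i + j, i, j⟩, ?_, hne, rfl⟩
    simp only [mem_sigma, mem_range, HasAntidiagonal.mem_antidiagonal, and_true]
    omega
  · intros; rfl

namespace IsExpAd

variable {L : Type} [LieRing L] [LieAlgebra ℂ L] {x : L} {T : L → L}

theorem apply_eq_sum_of_le (hT : IsExpAd x T) {y : L} {n N : ℕ} (hy : (ad ℂ L x ^ n) y = 0)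
    (hN : n ≤ N) : T y = ∑ k ∈ range N, ((k.factorial : ℂ))⁻¹ • (ad ℂ L x ^ k) y :=
  hT y N (Module.End.pow_map_zero_of_le hN hy)

theorem apply_eq_add_of_lie_eq (hT : IsExpAd x T) {y z : L} (hy : ⁅x, y⁆ = z) (hz : ⁅x, z⁆ = 0) :
    T y = y + z := by
  refine (hT y 2 ?_).trans ?_
  · simp [sq, hy, hz]
  · simp [sum_range_succ, hy]

theorem apply_eq_self_of_lie_eq_zero (hT : IsExpAd x T) {y : L} (hy : ⁅x, y⁆ = 0) : T y = y := by
  simpa using hT.apply_eq_add_of_lie_eq hy (lie_zero x)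

theorem map_add (hx : ∀ y : L, ∃ n, (ad ℂ L x ^ n) y = 0) (hT : IsExpAd x T) (y z : L) :
    T (y + z) = T y + T z := by
  obtain ⟨n, hn⟩ := hx y
  obtain ⟨m, hm⟩ := hx z
  have hyz : (ad ℂ L x ^ (n + m)) (y + z) = 0 := by
    rw [_root_.map_add, Module.End.pow_map_zero_of_le (by omega) hn,
      Module.End.pow_map_zero_of_le (by omega) hm, add_zero]
  rw [hT _ _ hyz, hT.apply_eq_sum_of_le hn (n.le_add_right m),
    hT.apply_eq_sum_of_le hm (m.le_add_left n), ← sum_add_distrib]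
  simp only [_root_.map_add, smul_add]

theorem map_smul (hx : ∀ y : L, ∃ n, (ad ℂ L x ^ n) y = 0) (hT : IsExpAd x T) (c : ℂ) (y : L) :
    T (c • y) = c • T y := by
  obtain ⟨n, hn⟩ := hx y
  rw [hT _ n (by rw [_root_.map_smul, hn, smul_zero]), hT _ n hn, smul_sum]
  simp only [_root_.map_smul, smul_comm c]

open scoped Nat in
theorem map_lie (hx : ∀ y : L, ∃ n, (ad ℂ L x ^ n) y = 0) (hT : IsExpAd x T) (a b : L) :
    T ⁅a, b⁆ = ⁅T a, T b⁆ := by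
  obtain ⟨n, hn⟩ := hx a
  obtain ⟨m, hm⟩ := hx b
  obtain ⟨p, hp⟩ := hx ⁅a, b⁆
  set g : ℕ × ℕ → L := fun q =>
    (q.1 ! : ℂ)⁻¹ • (q.2 ! : ℂ)⁻¹ • ⁅(ad ℂ L x ^ q.1) a, (ad ℂ L x ^ q.2) b⁆
  have hg : ∀ q : ℕ × ℕ, (n ≤ q.1 ∨ m ≤ q.2) → g q = 0 := by
    rintro q (hq | hq)
    · simp [g, Module.End.pow_map_zero_of_le hq hn]
    · simp [g, Module.End.pow_map_zero_of_le hq hm]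
  calc T ⁅a, b⁆ = ∑ k ∈ range (max p (n + m)), ((k ! : ℂ))⁻¹ • (ad ℂ L x ^ k) ⁅a, b⁆ :=
        hT.apply_eq_sum_of_le hp (le_max_left _ _)
    _ = ∑ k ∈ range (max p (n + m)), ∑ q ∈ antidiagonal k, g q := by
        refine sum_congr rfl fun k _ => ?_
        rw [ad_pow_lie, smul_sum]
        refine sum_congr rfl fun ⟨i, j⟩ hij => ?_
        rw [HasAntidiagonal.mem_antidiagonal] at hij
        subst hij
        dsimp only [g]
        rw [← Nat.cast_smul_eq_nsmul ℂ, smul_smul, smul_smul, Nat.cast_add_choose]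
        congr 1
        have : ((i + j)! : ℂ) ≠ 0 := Nat.cast_ne_zero.2 (Nat.factorial_ne_zero _)
        field_simp
    _ = ∑ q ∈ range n ×ˢ range m, g q :=
        sum_range_sum_antidiagonal_eq_sum_product (le_max_right _ _) hg
    _ = ⁅T a, T b⁆ := by
        rw [hT a n hn, hT b m hm, sum_lie_sum, sum_product]
        simp_rw [g, smul_lie, lie_smul]

noncomputable def toLieHom (hx : ∀ y : L, ∃ n, (ad ℂ L x ^ n) y = 0) (hT : IsExpAd x T) :
    L →ₗ⁅ℂ⁆ L where
  toFun := T
  map_add' := hT.map_add hx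
  map_smul' := hT.map_smul hx
  map_lie' := hT.map_lie hx _ _

theorem lieHom_apply {L' : Type} [LieRing L'] [LieAlgebra ℂ L'] {x' : L'} {T' : L' → L'}
    (hT : IsExpAd x T) (hT' : IsExpAd x' T')
    (φ : L →ₗ⁅ℂ⁆ L') (hφ : φ x = x') {y : L} (hy : ∃ n, (ad ℂ L x ^ n) y = 0) :
    φ (T y) = T' (φ y) := by
  obtain ⟨n, hn⟩ := hy
  have hpow : ∀ k, φ ((ad ℂ L x ^ k) y) = (ad ℂ L' x' ^ k) (φ y) := by
    intro k
    induction k with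
    | zero => rfl
    | succ k ih => rw [pow_succ', pow_succ', Module.End.mul_apply, Module.End.mul_apply, ad_apply,
        ad_apply, LieHom.map_lie, hφ, ih]
  rw [hT y n hn, hT' (φ y) n (by rw [← hpow, hn, map_zero]), map_sum]
  refine sum_congr rfl fun k _ => ?_
  rw [_root_.map_smul, hpow]

end IsExpAd

section Reflection

variable {L L' : Type} [LieRing L] [LieAlgebra ℂ L] [LieRing L'] [LieAlgebra ℂ L']

theorem LieHom.apply_expAd_expAd_expAd {e f : L} {e' f' : L'} {E F : L → L} {E' F' : L' → L'}
    (hE : IsExpAd e E) (hF : IsExpAd (-f) F) (hE' : IsExpAd e' E') (hF' : IsExpAd (-f') F')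
    (ne : ∀ y : L, ∃ n, (ad ℂ L e ^ n) y = 0) (nf : ∀ y : L, ∃ n, (ad ℂ L (-f) ^ n) y = 0)
    (φ : L →ₗ⁅ℂ⁆ L') (he : φ e = e') (hf : φ f = f') (y : L) :
    φ (E (F (E y))) = E' (F' (E' (φ y))) := by
  rw [hE.lieHom_apply hE' φ he (ne _), hF.lieHom_apply hF' φ (by rw [map_neg, hf]) (nf _),
    hE.lieHom_apply hE' φ he (ne y)]

theorem expAd_expAd_expAd_apply_of_lie_eq_zero {e f y : L} {E F : L → L} (hE : IsExpAd e E)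
    (hF : IsExpAd (-f) F) (he : ⁅e, y⁆ = 0) (hf : ⁅f, y⁆ = 0) : E (F (E y)) = y := by
  rw [hE.apply_eq_self_of_lie_eq_zero he,
    hF.apply_eq_self_of_lie_eq_zero (by rw [neg_lie, hf, neg_zero]),
    hE.apply_eq_self_of_lie_eq_zero he]

end Reflection

section Braid

variable {L : Type} [LieRing L] [LieAlgebra ℂ L] {ei fi hi ej fj hj : L} {Ei Fi Ej Fj : L → L}

theorem expAd_comp_apply_ei (heifi : ⁅ei, fi⁆ = hi) (hejfj : ⁅ej, fj⁆ = hj)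
    (hiej : ⁅hi, ej⁆ = -ej) (hjei : ⁅hj, ei⁆ = -ei) (heifj : ⁅ei, fj⁆ = 0) (hejfi : ⁅ej, fi⁆ = 0)
    (sij : ⁅ei, ⁅ei, ej⁆⁆ = 0) (sji : ⁅ej, ⁅ej, ei⁆⁆ = 0)
    (hEi : IsExpAd ei Ei) (hFi : IsExpAd (-fi) Fi) (hEj : IsExpAd ej Ej)
    (hFj : IsExpAd (-fj) Fj) :
    Ei (Fi (Ei (Ej (Fj (Ej ei))))) = ej := by
  have hfjei : ⁅fj, ei⁆ = 0 := lie_eq_zero_comm.1 heifj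
  have hfiej : ⁅fi, ej⁆ = 0 := lie_eq_zero_comm.1 hejfi
  have heic : ⁅ei, ⁅ej, ei⁆⁆ = 0 := by rw [← lie_skew ej ei, lie_neg, sij, neg_zero]
  have hfjc : ⁅fj, ⁅ej, ei⁆⁆ = ei := by
    rw [leibniz_lie, ← lie_skew fj ej, hejfj, hfjei, lie_zero, add_zero, neg_lie, hjei, neg_neg]
  have hfic : ⁅fi, ⁅ej, ei⁆⁆ = -ej := by
    rw [leibniz_lie, hfiej, zero_lie, zero_add, ← lie_skew fi ei, heifi, lie_neg, ← lie_skew,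
      hiej, neg_neg]
  set c := ⁅ej, ei⁆
  calc Ei (Fi (Ei (Ej (Fj (Ej ei)))))
      = Ei (Fi (Ei (Ej (Fj (ei + c))))) := by
        rw [hEj.apply_eq_add_of_lie_eq rfl sji]
    _ = Ei (Fi (Ei (Ej c))) := by
      rw [hFj.apply_eq_add_of_lie_eq (z := -ei) (by rw [neg_lie, lie_add, hfjei, hfjc, zero_add])
        (by rw [neg_lie, lie_neg, hfjei, neg_zero, neg_zero]), add_neg_cancel_comm]
    _ = Ei (Fi c) := by
      rw [hEj.apply_eq_self_of_lie_eq_zero sji, hEi.apply_eq_self_of_lie_eq_zero heic]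
    _ = Ei (c + ej) := by
      rw [hFi.apply_eq_add_of_lie_eq (by rw [neg_lie, hfic, neg_neg])
        (by rw [neg_lie, hfiej, neg_zero])]
    _ = ej := by
      rw [hEi.apply_eq_add_of_lie_eq (z := -c) (by rw [lie_add, heic, zero_add, ← lie_skew])
        (by rw [lie_neg, heic, neg_zero]), add_neg_cancel_comm]

theorem expAd_comp_apply_fi (heifi : ⁅ei, fi⁆ = hi) (hejfj : ⁅ej, fj⁆ = hj)
    (hifj : ⁅hi, fj⁆ = fj) (hjfi : ⁅hj, fi⁆ = fi) (heifj : ⁅ei, fj⁆ = 0) (hejfi : ⁅ej, fi⁆ = 0)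
    (sij : ⁅fi, ⁅fi, fj⁆⁆ = 0) (sji : ⁅fj, ⁅fj, fi⁆⁆ = 0)
    (hEi : IsExpAd ei Ei) (hFi : IsExpAd (-fi) Fi) (hEj : IsExpAd ej Ej)
    (hFj : IsExpAd (-fj) Fj) :
    Ei (Fi (Ei (Ej (Fj (Ej fi))))) = fj := by
  have hfjd : ⁅fj, ⁅fi, fj⁆⁆ = 0 := by rw [← lie_skew fi fj, lie_neg, sji, neg_zero]
  have hejd : ⁅ej, ⁅fi, fj⁆⁆ = -fi := by
    rw [leibniz_lie, hejfi, zero_lie, zero_add, hejfj, ← lie_skew, hjfi]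
  have heid : ⁅ei, ⁅fi, fj⁆⁆ = fj := by
    rw [leibniz_lie, heifi, heifj, hifj, lie_zero, add_zero]
  set d := ⁅fi, fj⁆
  calc Ei (Fi (Ei (Ej (Fj (Ej fi)))))
      = Ei (Fi (Ei (Ej (fi + d)))) := by
        rw [hEj.apply_eq_self_of_lie_eq_zero hejfi, hFj.apply_eq_add_of_lie_eq
          (z := d) (by rw [neg_lie, ← lie_skew fj fi, neg_neg]) (by rw [neg_lie, hfjd, neg_zero])]
    _ = Ei (Fi (Ei d)) := by
      rw [hEj.apply_eq_add_of_lie_eq (z := -fi) (by rw [lie_add, hejfi, hejd, zero_add])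
        (by rw [lie_neg, hejfi, neg_zero]), add_neg_cancel_comm]
    _ = Ei (Fi (d + fj)) := by
      rw [hEi.apply_eq_add_of_lie_eq heid heifj]
    _ = fj := by
      rw [hFi.apply_eq_add_of_lie_eq (z := -d) (by rw [neg_lie, lie_add, sij, zero_add])
        (by rw [neg_lie, lie_neg, sij, neg_zero, neg_zero]), add_neg_cancel_comm,
        hEi.apply_eq_self_of_lie_eq_zero heifj]

end Braid

/-- Braid relations for `T_i = exp(ad e_i) exp(ad (-f_i)) exp(ad e_i)` on a Kac–Moody algebra:
if `a_{ij} = a_{ji} = -1` then `T_i T_j T_i = T_j T_i T_j`;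
if `a_{ij} = a_{ji} = 0` then `T_i T_j = T_j T_i`. -/
theorem stmt6 :
    (∀ (L : Type) [LieRing L] [LieAlgebra ℂ L], ∀ (ei fi hi ej fj hj : L),
      ⁅hi, ei⁆ = (2 : ℂ) • ei → ⁅hi, fi⁆ = (-2 : ℂ) • fi → ⁅ei, fi⁆ = hi →
      ⁅hj, ej⁆ = (2 : ℂ) • ej → ⁅hj, fj⁆ = (-2 : ℂ) • fj → ⁅ej, fj⁆ = hj →
      ⁅hi, ej⁆ = (-1 : ℂ) • ej → ⁅hi, fj⁆ = (1 : ℂ) • fj →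
      ⁅hj, ei⁆ = (-1 : ℂ) • ei → ⁅hj, fi⁆ = (1 : ℂ) • fi →
      ⁅ei, fj⁆ = 0 → ⁅ej, fi⁆ = 0 → ⁅hi, hj⁆ = 0 →
      ((LieAlgebra.ad ℂ L ei) ^ 2) ej = 0 → ((LieAlgebra.ad ℂ L fi) ^ 2) fj = 0 →
      ((LieAlgebra.ad ℂ L ej) ^ 2) ei = 0 → ((LieAlgebra.ad ℂ L fj) ^ 2) fi = 0 →
      (∀ y : L, ∃ n : ℕ, ((LieAlgebra.ad ℂ L ei) ^ n) y = 0) →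
      (∀ y : L, ∃ n : ℕ, ((LieAlgebra.ad ℂ L (-fi)) ^ n) y = 0) →
      (∀ y : L, ∃ n : ℕ, ((LieAlgebra.ad ℂ L ej) ^ n) y = 0) →
      (∀ y : L, ∃ n : ℕ, ((LieAlgebra.ad ℂ L (-fj)) ^ n) y = 0) →
      ∀ (Eei Ffi Eej Ffj : L → L),
        IsExpAd ei Eei → IsExpAd (-fi) Ffi → IsExpAd ej Eej → IsExpAd (-fj) Ffj →
        ∀ y : L,
          Eei (Ffi (Eei (Eej (Ffj (Eej (Eei (Ffi (Eei y)))))))) =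
            Eej (Ffj (Eej (Eei (Ffi (Eei (Eej (Ffj (Eej y)))))))))
    ∧
    (∀ (L : Type) [LieRing L] [LieAlgebra ℂ L], ∀ (ei fi hi ej fj hj : L),
      ⁅hi, ei⁆ = (2 : ℂ) • ei → ⁅hi, fi⁆ = (-2 : ℂ) • fi → ⁅ei, fi⁆ = hi →
      ⁅hj, ej⁆ = (2 : ℂ) • ej → ⁅hj, fj⁆ = (-2 : ℂ) • fj → ⁅ej, fj⁆ = hj →
      ⁅hi, ej⁆ = 0 → ⁅hi, fj⁆ = 0 → ⁅hj, ei⁆ = 0 → ⁅hj, fi⁆ = 0 →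
      ⁅ei, fj⁆ = 0 → ⁅ej, fi⁆ = 0 → ⁅hi, hj⁆ = 0 →
      ⁅ei, ej⁆ = 0 → ⁅fi, fj⁆ = 0 →
      (∀ y : L, ∃ n : ℕ, ((LieAlgebra.ad ℂ L ei) ^ n) y = 0) →
      (∀ y : L, ∃ n : ℕ, ((LieAlgebra.ad ℂ L (-fi)) ^ n) y = 0) →
      (∀ y : L, ∃ n : ℕ, ((LieAlgebra.ad ℂ L ej) ^ n) y = 0) →
      (∀ y : L, ∃ n : ℕ, ((LieAlgebra.ad ℂ L (-fj)) ^ n) y = 0) →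
      ∀ (Eei Ffi Eej Ffj : L → L),
        IsExpAd ei Eei → IsExpAd (-fi) Ffi → IsExpAd ej Eej → IsExpAd (-fj) Ffj →
        ∀ y : L,
          Eei (Ffi (Eei (Eej (Ffj (Eej y))))) = Eej (Ffj (Eej (Eei (Ffi (Eei y)))))) := by
  constructor
  · intro L _ _ ei fi hi ej fj hj _ _ heifi _ _ hejfj hiej hifj hjei hjfi heifj hejfi _
      sij sfij sji sfji nEi nFi nEj nFj Ei Fi Ej Fj hEi hFi hEj hFj y
    rw [neg_one_smul] at hiej hjei
    rw [one_smul] at hifj hjfi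
    let Ti := (hEi.toLieHom nEi).comp ((hFi.toLieHom nFi).comp (hEi.toLieHom nEi))
    let Tj := (hEj.toLieHom nEj).comp ((hFj.toLieHom nFj).comp (hEj.toLieHom nEj))
    exact (Ti.comp Tj).apply_expAd_expAd_expAd hEi hFi hEj hFj nEi nFi
      (expAd_comp_apply_ei heifi hejfj hiej hjei heifj hejfi sij sji hEi hFi hEj hFj)
      (expAd_comp_apply_fi heifi hejfj hifj hjfi heifj hejfi sfij sfji hEi hFi hEj hFj) y
  · intro L _ _ ei fi hi ej fj hj _ _ _ _ _ _ _ _ _ _ heifj hejfi _ heiej hfifj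
      nEi nFi nEj nFj Ei Fi Ej Fj hEi hFi hEj hFj y
    let Tj := (hEj.toLieHom nEj).comp ((hFj.toLieHom nFj).comp (hEj.toLieHom nEj))
    exact (Tj.apply_expAd_expAd_expAd hEi hFi hEi hFi nEi nFi
      (expAd_expAd_expAd_apply_of_lie_eq_zero hEj hFj (lie_eq_zero_comm.1 heiej)
        (lie_eq_zero_comm.1 heifj))
      (expAd_expAd_expAd_apply_of_lie_eq_zero hEj hFj hejfi (lie_eq_zero_comm.1 hfifj)) y).symm
end

section
/- Let $N \ge 3$ and consider $\hat{\mathfrak{gl}}_N$ with affine Chevalley generators $x_0^{\pm}$ and $x_i^{\pm}$ ($1 \le i \le N-1$) as usual, and braid operators $T_i$. Then $T_0 T_1 \cdots T_{k-1}(x_k^+) = E_{N,k+1}(1)$ for $0 \le k \le N-2$, and $T_0 T_1 \cdots T_{N-2}(x_{N-1}^+) = -E_{N,1}(2)$. -/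
/-- A copy of the affine Lie algebra `ĝl_N = gl_N ⊗ ℂ[t,t⁻¹] ⊕ ℂc` inside a Lie algebra `L`:
a family `E i j s` (the elements `E_{i,j}(s) = E_{i,j} ⊗ tˢ`, with matrix-unit indices in
`ZMod N`, the label `N` corresponding to `0`) and a central element `c`, satisfying
`[X(r), Y(s)] = [X,Y](r+s) + r δ_{r+s,0} tr(XY) c`. -/
structure AffineGLData (N : ℕ) (L : Type) [LieRing L] [LieAlgebra ℂ L] where
  E : ZMod N → ZMod N → ℤ → L
  c : L
  central : ∀ y : L, ⁅c, y⁆ = 0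
  bracket_eq : ∀ (i j k l : ZMod N) (r s : ℤ),
    ⁅E i j r, E k l s⁆ =
      (if j = k then E i l (r + s) else 0) - (if l = i then E k j (r + s) else 0) +
      (if j = k ∧ l = i ∧ r + s = 0 then (r : ℂ) • c else 0)

variable {N : ℕ} {L : Type} [LieRing L] [LieAlgebra ℂ L]

/-- The affine Chevalley generator `x_k⁺` (`x_0⁺ = E_{N,1}(1)`, `x_i⁺ = E_{i,i+1}(0)`). -/
def xp (d : AffineGLData N L) (k : ZMod N) : L :=
  if k = 0 then d.E 0 1 1 else d.E k (k + 1) 0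

/-- The affine Chevalley generator `x_k⁻` (`x_0⁻ = E_{1,N}(-1)`, `x_i⁻ = E_{i+1,i}(0)`). -/
def xm (d : AffineGLData N L) (k : ZMod N) : L :=
  if k = 0 then d.E 1 0 (-1) else d.E (k + 1) k 0

/-- The exponential of `ad X` (exact whenever `(ad X)^3 = 0`, as holds for the
adjoint action of the Chevalley generators on `ĝl_N`). -/
noncomputable def expAd (X A : L) : L :=
  A + ⁅X, A⁆ + (2 : ℂ)⁻¹ • ⁅X, ⁅X, A⁆⁆

/-- The braid operator `T_k = exp(ad x_k⁺) exp(ad (-x_k⁻)) exp(ad x_k⁺)` on `ĝl_N`. -/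
noncomputable def Taff (d : AffineGLData N L) (k : ZMod N) (A : L) : L :=
  expAd (xp d k) (expAd (-(xm d k)) (expAd (xp d k) A))

/-- `TaffComp d [k₁,…,kₗ] A = T_{k₁} (T_{k₂} ⋯ (T_{kₗ} A))`. -/
noncomputable def TaffComp (d : AffineGLData N L) (ks : List (ZMod N)) (A : L) : L :=
  ks.foldr (Taff d) A

/-!
Each `T_j` with `1 ≤ j` only moves the row index `j + 1` of a matrix unit to `j`, as long as the
column index is neither `j` nor `j + 1`; so `T_1 ⋯ T_{k-1}` carries `x_k⁺ = E_{k,k+1}(0)` to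
`E_{1,k+1}(0)`, and `T_0` then turns this into `E_{N,k+1}(1)`. For `k = N - 1` the column index is
`N ≡ 0`, and the last step `T_0(E_{1,N}(0))` picks up the extra terms that give `-E_{N,1}(2)`.
-/

lemma ZMod.natCast_ne_natCast {a b : ℕ} (ha : a < N) (hb : b < N) (h : a ≠ b) :
    (a : ZMod N) ≠ b := by
  rw [Ne, ZMod.natCast_eq_natCast_iff', Nat.mod_eq_of_lt ha, Nat.mod_eq_of_lt hb]
  exact h

lemma ZMod.natCast_ne_zero_of_lt {a : ℕ} (ha0 : a ≠ 0) (ha : a < N) : (a : ZMod N) ≠ 0 := by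
  simpa using ZMod.natCast_ne_natCast ha (Nat.pos_of_ne_zero ha0 |>.trans ha) ha0

namespace AffineGLData

variable (d : AffineGLData N L)

lemma xp_natCast {k : ℕ} (hk0 : k ≠ 0) (hk : k < N) :
    xp d (k : ZMod N) = d.E k ((k + 1 : ℕ) : ZMod N) 0 := by
  rw [xp, if_neg (ZMod.natCast_ne_zero_of_lt hk0 hk), Nat.cast_succ]

lemma taffComp_range_succ (k : ℕ) (A : L) :
    TaffComp d ((List.range (k + 1)).map (fun t => (t : ZMod N))) A =
      TaffComp d ((List.range k).map (fun t => (t : ZMod N))) (Taff d k A) := by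
  simp [TaffComp, List.range_succ]

variable [Nontrivial (ZMod N)]

lemma taff_E_succ_left {j m : ZMod N} (s : ℤ) (hj : j ≠ 0) (hmj : m ≠ j) (hmj' : m ≠ j + 1) :
    Taff d j (d.E (j + 1) m s) = d.E j m s := by
  simp only [Taff, expAd, xp, xm, if_neg hj]
  simp [d.bracket_eq, hmj, hmj', lie_add, lie_neg, neg_lie]

lemma taff_zero_E_one_left {m : ZMod N} (s : ℤ) (hm0 : m ≠ 0) (hm1 : m ≠ 1) :
    Taff d 0 (d.E 1 m s) = d.E 0 m (s + 1) := by
  simp only [Taff, expAd, xp, xm, if_pos]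
  simp [d.bracket_eq, hm0, hm1, lie_add, lie_neg, neg_lie, add_comm]

lemma taff_zero_E_one_zero : Taff d 0 (d.E 1 0 0) = -d.E 0 1 2 := by
  simp only [Taff, expAd, xp, xm, if_pos]
  simp only [d.bracket_eq, ↓reduceIte, add_zero, one_ne_zero, and_false, lie_sub, Int.reduceAdd,
    zero_sub, OfNat.ofNat_ne_zero, and_self, sub_zero, Int.reduceNeg, lie_add, neg_lie, zero_ne_one,
    sub_self, neg_eq_zero, neg_zero, neg_add_cancel, and_true, neg_neg, zero_add, lie_smul, lie_neg,
    neg_sub, sub_neg_eq_add, smul_smul, smul_zero, add_sub_cancel, smul_add]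
  module

lemma taffComp_range_E_left (k : ℕ) (hk : k + 1 < N) {m : ZMod N} (s : ℤ)
    (hm : ∀ j : ℕ, 1 ≤ j → j ≤ k + 1 → m ≠ j) :
    TaffComp d ((List.range (k + 1)).map (fun t => (t : ZMod N)))
        (d.E ((k + 1 : ℕ) : ZMod N) m s) = Taff d 0 (d.E 1 m s) := by
  induction k with
  | zero => simp [TaffComp]
  | succ k ih =>
    have hk0 : ((k + 1 : ℕ) : ZMod N) ≠ 0 := ZMod.natCast_ne_zero_of_lt k.succ_ne_zero (by omega)
    rw [taffComp_range_succ, Nat.cast_succ (k + 1),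
      taff_E_succ_left d s hk0 (hm (k + 1) le_add_self (by omega))
        (by rw [← Nat.cast_succ]; exact hm (k + 2) (by omega) le_rfl)]
    exact ih (by omega) fun j hj hjk => hm j hj (by omega)

end AffineGLData

theorem stmt13_general (N : ℕ) (hN : 3 ≤ N) (L : Type) [LieRing L] [LieAlgebra ℂ L]
    (d : AffineGLData N L) :
    (∀ k : ℕ, k ≤ N - 2 →
      TaffComp d ((List.range k).map (fun t => (t : ZMod N))) (xp d (k : ZMod N)) =
        d.E 0 ((k : ZMod N) + 1) 1) ∧
    TaffComp d ((List.range (N - 1)).map (fun t => (t : ZMod N)))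
        (xp d ((N - 1 : ℕ) : ZMod N)) = -(d.E 0 1 2) := by
  have : Fact (1 < N) := ⟨by omega⟩
  constructor
  · rintro (_ | k) hk
    · simp [TaffComp, xp]
    · have hm0 : ((k + 2 : ℕ) : ZMod N) ≠ 0 := ZMod.natCast_ne_zero_of_lt (by omega) (by omega)
      have hm1 : ((k + 2 : ℕ) : ZMod N) ≠ 1 := by
        simpa using ZMod.natCast_ne_natCast (a := k + 2) (b := 1) (by omega) (by omega) (by omega)
      rw [d.xp_natCast (by omega) (by omega), ← Nat.cast_succ,
        d.taffComp_range_E_left k (by omega) 0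
          fun j _ _ => ZMod.natCast_ne_natCast (by omega) (by omega) (by omega),
        d.taff_zero_E_one_left 0 hm0 hm1, zero_add]
  · obtain ⟨k, hk⟩ : ∃ k, N - 1 = k + 1 := ⟨N - 2, by omega⟩
    rw [hk, d.xp_natCast (by omega) (by omega), show k + 1 + 1 = N by omega, ZMod.natCast_self,
      d.taffComp_range_E_left k (by omega) 0
        fun j _ _ => (ZMod.natCast_ne_zero_of_lt (by omega) (by omega)).symm]
    exact d.taff_zero_E_one_zero

theorem stmt13 (N : ℕ) [NeZero N] (hN : 3 ≤ N) (L : Type) [LieRing L] [LieAlgebra ℂ L]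
    (d : AffineGLData N L) :
    (∀ k : ℕ, k ≤ N - 2 →
      TaffComp d ((List.range k).map (fun t => (t : ZMod N))) (xp d (k : ZMod N)) =
        d.E 0 ((k : ZMod N) + 1) 1) ∧
    TaffComp d ((List.range (N - 1)).map (fun t => (t : ZMod N)))
        (xp d ((N - 1 : ℕ) : ZMod N)) = -(d.E 0 1 2) :=
  stmt13_general N hN L d
end

section
/- In the affine Kac–Moody Lie algebra $\hat{\mathfrak{sl}}_N$ ($N \ge 3$, realized inside $\hat{\mathfrak{gl}}_N$ with fixed central value), define for each $i \in \mathbb{Z}/N\mathbb{Z}$ and $m \ge 1$ the Weyl group element $w(i,m) = t_{-\alpha_{i+1}}^{m-1} s_{i+1}s_{i+2}\cdots s_{i-3}s_{i-2}$ with corresponding braid operator $T_{w(i,m)}$. Then $T_{w(i,m)}(x_{i-1}^+) = (-1)^{m-1} E_{1,N}(m-1)$ if $i = 0$, and $T_{w(i,m)}(x_{i-1}^+) = (-1)^{m-1} E_{i+1,i}(m)$ if $i \ne 0$. -/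
variable {N : ℕ} {L : Type} [LieRing L] [LieAlgebra ℂ L]

/-- The reduced word `s_{i+1} s_{i+2} ⋯ s_{i-2}` (length `N-2`). -/
def tailWord (N : ℕ) (i : ZMod N) : List (ZMod N) :=
  (List.range (N - 2)).map (fun k => i + (k : ZMod N) + 1)

/-- The reduced word of the translation `t_{-α_{i+1}}`; for `i = 1` this is
`s_2 s_3 ⋯ s_{N-1} s_0 s_1 s_0 s_{N-1} ⋯ s_3`. -/
def tWord (N : ℕ) (i : ZMod N) : List (ZMod N) :=
  (List.range (N - 2)).map (fun k => i + (k : ZMod N) + 1) ++ [i - 1, i, i - 1] ++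
    ((List.range (N - 3)).map (fun k => i + (k : ZMod N) + 2)).reverse

/-- The word of `w(i,m) = t_{-α_{i+1}}^{m-1} s_{i+1} s_{i+2} ⋯ s_{i-3} s_{i-2}`. -/
def wWord (N : ℕ) (i : ZMod N) (m : ℕ) : List (ZMod N) :=
  (List.replicate (m - 1) (tWord N i)).flatten ++ tailWord N i

/-!
Realise `ĝl_N` through the `N`-periodic `ℤ × ℤ` matrix units `F p q`. Each `T_k` then permutes
these units, up to sign, like the affine permutation exchanging the residues `k` and `k + 1`: it
lowers a row or column index `≡ k + 1` by one, and maps `F p q` with `p ≡ k + 1`, `q ≡ k` to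
`-F (p - 1) (q + 1)`; each case is an `sl₂` computation on a doublet, or on a doublet tensored
with a dual doublet (plus a central term). Starting from `x_{i-1}⁺ = F a (a + 1)` with
`a ≡ i - 1`, the word `s_{i+1} ⋯ s_{i-2}` lowers the row index to `a + 2 - N`, and every factor
`t_{-α_{i+1}}` lowers it by another `N` at the cost of a sign. The result
`(-1)^{m-1} F (a + 2 - mN) (a + 1)` is the claimed element.
-/

section Braid

noncomputable def adBraid (e f A : L) : L := expAd e (expAd (-f) (expAd e A))

theorem adBraid_smul (e f : L) (r : ℂ) (A : L) : adBraid e f (r • A) = r • adBraid e f A := by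
  have h : ∀ X B : L, expAd X (r • B) = r • expAd X B := by
    intro X B
    simp only [expAd, lie_smul]
    module
  simp only [adBraid, h]

theorem adBraid_eq_self {e f A : L} (he : ⁅e, A⁆ = 0) (hf : ⁅f, A⁆ = 0) : adBraid e f A = A := by
  simp [adBraid, expAd, he, hf]

variable {e f x₁ x₂ : L}

theorem adBraid_of_doublet_fst (he₁ : ⁅e, x₁⁆ = 0) (he₂ : ⁅e, x₂⁆ = x₁) (hf₁ : ⁅f, x₁⁆ = x₂)
    (hf₂ : ⁅f, x₂⁆ = 0) : adBraid e f x₁ = -x₂ := by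
  simp only [adBraid, expAd, he₁, he₂, hf₁, hf₂, neg_lie, lie_add, lie_neg, lie_zero,
    neg_zero, smul_zero, add_zero]
  module

theorem adBraid_of_doublet_snd (he₁ : ⁅e, x₁⁆ = 0) (he₂ : ⁅e, x₂⁆ = x₁) (hf₁ : ⁅f, x₁⁆ = x₂)
    (hf₂ : ⁅f, x₂⁆ = 0) : adBraid e f x₂ = x₁ := by
  simp only [adBraid, expAd, he₁, he₂, hf₁, hf₂, neg_lie, lie_add, lie_neg, lie_zero,
    neg_zero, smul_zero, add_zero]
  module

theorem adBraid_of_doublet_tensor {x₁₁ x₁₂ x₂₁ x₂₂ z : L} (hz : ∀ y : L, ⁅y, z⁆ = 0)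
    (he₁₁ : ⁅e, x₁₁⁆ = -x₁₂) (he₁₂ : ⁅e, x₁₂⁆ = 0) (he₂₁ : ⁅e, x₂₁⁆ = x₁₁ - x₂₂ + z)
    (he₂₂ : ⁅e, x₂₂⁆ = x₁₂) (hf₁₁ : ⁅f, x₁₁⁆ = x₂₁) (hf₁₂ : ⁅f, x₁₂⁆ = x₂₂ - x₁₁ - z)
    (hf₂₁ : ⁅f, x₂₁⁆ = 0) (hf₂₂ : ⁅f, x₂₂⁆ = -x₂₁) :
    adBraid e f x₂₁ = -x₁₂ := by
  simp only [adBraid, expAd, he₁₁, he₁₂, he₂₁, he₂₂, hf₁₁, hf₁₂, hf₂₁, hf₂₂, hz, neg_lie, lie_add,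
    lie_sub, lie_neg, lie_smul, lie_zero, neg_zero, smul_zero, add_zero, sub_zero, neg_neg]
  module

end Braid

theorem sub_eq_mul_ediv_sub_ediv_of_intCast_eq {p q : ℤ} (h : (p : ZMod N) = q) :
    p - q = N * ((p - 1) / N - (q - 1) / N) := by
  have hmod := (ZMod.intCast_eq_intCast_iff' (p - 1) (q - 1) N).mp (by push_cast; rw [h])
  rw [Int.emod_def, Int.emod_def] at hmod
  linear_combination hmod

theorem ediv_sub_sub_one_ediv [NeZero N] (a : ℤ) :
    a / N - (a - 1) / N = if (a : ZMod N) = 0 then 1 else 0 := by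
  have hN : (0 : ℤ) < N := by exact_mod_cast Nat.pos_of_ne_zero (NeZero.ne N)
  have hr₀ := Int.emod_nonneg a hN.ne'
  have hr₁ := Int.emod_lt_of_pos a hN
  have ha := Int.emod_add_mul_ediv a N
  split_ifs with h
  · rw [ZMod.intCast_zmod_eq_zero_iff_dvd, Int.dvd_iff_emod_eq_zero] at h
    have : (a - 1) / N = a / N - 1 :=
      ((Int.ediv_emod_unique (r := N - 1) hN).mpr
        ⟨by linear_combination ha - h, by omega, by omega⟩).1
    omega
  · rw [ZMod.intCast_zmod_eq_zero_iff_dvd, Int.dvd_iff_emod_eq_zero] at h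
    have : (a - 1) / N = a / N :=
      ((Int.ediv_emod_unique (r := a % N - 1) hN).mpr
        ⟨by linear_combination ha, by omega, by omega⟩).1
    omega

namespace AffineGLData

variable (d : AffineGLData N L)

theorem lie_c (x : L) : ⁅x, d.c⁆ = 0 := by
  rw [← lie_skew, d.central, neg_zero]

/-- In the realisation of `gl_N[t, t⁻¹]` as `N`-periodic `ℤ × ℤ` matrices (`E_{i,j}(s)` being the
sum of the units in rows `≡ i`, columns `≡ j`, `s` blocks of size `N` right of the diagonal),
`F p q` is the periodic extension of the unit in row `p`, column `q`. Rows `1, …, N` form block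
`0`, matching the label `N ↔ 0`. -/
noncomputable def F (p q : ℤ) : L :=
  d.E p q ((q - 1) / N - (p - 1) / N)

variable [NeZero N]

theorem E_eq_F_of_intCast_eq {p q r s : ℤ} (h : (q : ZMod N) = r) :
    d.E p s ((q - 1) / N - (p - 1) / N + ((s - 1) / N - (r - 1) / N)) = d.F p (s + q - r) := by
  have hN : (N : ℤ) ≠ 0 := by exact_mod_cast NeZero.ne N
  rw [F, show s + q - r - 1 = s - 1 + N * ((q - 1) / N - (r - 1) / N) by
    rw [← sub_eq_mul_ediv_sub_ediv_of_intCast_eq h]; ring, Int.add_mul_ediv_left _ _ hN]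
  congr 1
  · push_cast [h]; ring
  · ring

theorem lie_F_F (p q r s : ℤ) :
    ⁅d.F p q, d.F r s⁆ =
      (if (q : ZMod N) = r then d.F p (s + q - r) else 0) -
        (if (s : ZMod N) = p then d.F r (q + s - p) else 0) +
        (if (q : ZMod N) = r ∧ (s : ZMod N) = p ∧ p + r = q + s then
          (((q - 1) / N - (p - 1) / N : ℤ) : ℂ) • d.c else 0) := by
  have hN : (N : ℤ) ≠ 0 := by exact_mod_cast NeZero.ne N
  rw [F, F, d.bracket_eq]
  by_cases h₁ : (q : ZMod N) = r <;> by_cases h₂ : (s : ZMod N) = p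
  · have hq := sub_eq_mul_ediv_sub_ediv_of_intCast_eq h₁
    have hs := sub_eq_mul_ediv_sub_ediv_of_intCast_eq h₂
    have hcentral : (q : ZMod N) = r ∧ (s : ZMod N) = p ∧
        (q - 1) / N - (p - 1) / N + ((s - 1) / N - (r - 1) / N) = 0 ↔
        (q : ZMod N) = r ∧ (s : ZMod N) = p ∧ p + r = q + s := by
      refine and_congr_right' (and_congr_right' ⟨fun h0 => ?_, fun h0 => ?_⟩)
      · linear_combination -hq - hs - N * h0
      · exact (mul_eq_zero.mp (by linear_combination -hq - hs - h0)).resolve_left hN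
    rw [if_congr hcentral rfl rfl, if_pos h₁, if_pos h₂, if_pos h₁, if_pos h₂,
      E_eq_F_of_intCast_eq d h₁, add_comm ((q - 1) / N - _), E_eq_F_of_intCast_eq d h₂]
  · rw [if_pos h₁, if_neg h₂, if_pos h₁, if_neg h₂, if_neg (fun h => h₂ h.2.1),
      if_neg (fun h => h₂ h.2.1), E_eq_F_of_intCast_eq d h₁]
  · rw [if_neg h₁, if_pos h₂, if_neg h₁, if_pos h₂, if_neg (fun h => h₁ h.1),
      if_neg (fun h => h₁ h.1), add_comm ((q - 1) / N - _), E_eq_F_of_intCast_eq d h₂]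
  · rw [if_neg h₁, if_neg h₂, if_neg h₁, if_neg h₂, if_neg (fun h => h₁ h.1),
      if_neg (fun h => h₁ h.1)]

variable {p q r s : ℤ}

theorem lie_F_F_of_ne_of_ne (h₁ : (q : ZMod N) ≠ r) (h₂ : (s : ZMod N) ≠ p) :
    ⁅d.F p q, d.F r s⁆ = 0 := by
  simp [lie_F_F, h₁, h₂]

theorem lie_F_F_of_eq_of_ne (h₁ : (q : ZMod N) = r) (h₂ : (s : ZMod N) ≠ p) :
    ⁅d.F p q, d.F r s⁆ = d.F p (s + q - r) := by
  simp [lie_F_F, h₁, h₂]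

theorem lie_F_F_of_ne_of_eq (h₁ : (q : ZMod N) ≠ r) (h₂ : (s : ZMod N) = p) :
    ⁅d.F p q, d.F r s⁆ = -d.F r (q + s - p) := by
  simp [lie_F_F, h₁, h₂]

theorem lie_F_F_of_eq_of_eq (h₁ : (q : ZMod N) = r) (h₂ : (s : ZMod N) = p) :
    ⁅d.F p q, d.F r s⁆ = d.F p (s + q - r) - d.F r (q + s - p) +
      if p + r = q + s then (((q - 1) / N - (p - 1) / N : ℤ) : ℂ) • d.c else 0 := by
  simp [lie_F_F, h₁, h₂]

variable {a : ℤ} {k : ZMod N}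

theorem xp_eq_F (ha : (a : ZMod N) = k) : xp d k = d.F a (a + 1) := by
  have hdeg := ediv_sub_sub_one_ediv (N := N) a
  rw [xp, F, add_sub_cancel_right, hdeg, ha]
  push_cast [ha]
  split_ifs with hk <;> simp [hk]

theorem xm_eq_F (ha : (a : ZMod N) = k) : xm d k = d.F (a + 1) a := by
  have hdeg := ediv_sub_sub_one_ediv (N := N) a
  rw [xm, F, add_sub_cancel_right, ← neg_sub, hdeg, ha]
  push_cast [ha]
  split_ifs with hk <;> simp [hk]

theorem Taff_eq_adBraid (ha : (a : ZMod N) = k) :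
    Taff d k = adBraid (d.F a (a + 1)) (d.F (a + 1) a) := by
  ext A
  rw [Taff, adBraid, xp_eq_F d ha, xm_eq_F d ha]

variable {p q : ℤ}

theorem Taff_F_of_ne (hp₀ : (p : ZMod N) ≠ k) (hp₁ : (p : ZMod N) ≠ k + 1)
    (hq₀ : (q : ZMod N) ≠ k) (hq₁ : (q : ZMod N) ≠ k + 1) : Taff d k (d.F p q) = d.F p q := by
  obtain ⟨a, rfl⟩ := ZMod.intCast_surjective k
  rw [Taff_eq_adBraid d rfl]
  refine adBraid_eq_self (d.lie_F_F_of_ne_of_ne ?_ ?_) (d.lie_F_F_of_ne_of_ne ?_ ?_) <;>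
    push_cast <;> tauto

variable [Nontrivial (ZMod N)]

theorem Taff_F_of_fst_eq (hp : (p : ZMod N) = k + 1) (hq₀ : (q : ZMod N) ≠ k)
    (hq₁ : (q : ZMod N) ≠ k + 1) : Taff d k (d.F p q) = d.F (p - 1) q := by
  obtain ⟨a, rfl⟩ : ∃ a, p = a + 1 := ⟨p - 1, by ring⟩
  have ha : (a : ZMod N) = k := by push_cast at hp; exact add_right_cancel hp
  have hk : k + 1 ≠ k := add_ne_left.mpr one_ne_zero
  rw [Taff_eq_adBraid d ha, add_sub_cancel_right]
  refine adBraid_of_doublet_snd ?_ ?_ ?_ ?_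
  · exact d.lie_F_F_of_ne_of_ne (by push_cast; rwa [ha]) (by rwa [ha])
  · rw [d.lie_F_F_of_eq_of_ne rfl (by rwa [ha]), add_sub_cancel_right]
  · rw [d.lie_F_F_of_eq_of_ne rfl (by rwa [hp]), add_sub_cancel_right]
  · exact d.lie_F_F_of_ne_of_ne (by push_cast; rw [ha]; exact hk.symm) (by rwa [hp])

theorem Taff_F_of_snd_eq (hp₀ : (p : ZMod N) ≠ k) (hp₁ : (p : ZMod N) ≠ k + 1)
    (hq : (q : ZMod N) = k + 1) : Taff d k (d.F p q) = d.F p (q - 1) := by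
  obtain ⟨a, rfl⟩ : ∃ a, q = a + 1 := ⟨q - 1, by ring⟩
  have ha : (a : ZMod N) = k := by push_cast at hq; exact add_right_cancel hq
  have hk : k + 1 ≠ k := add_ne_left.mpr one_ne_zero
  rw [Taff_eq_adBraid d ha, add_sub_cancel_right, ← neg_neg (d.F p a)]
  refine adBraid_of_doublet_fst ?_ ?_ ?_ ?_
  · exact d.lie_F_F_of_ne_of_ne (by rw [hq]; exact hp₁.symm) (by push_cast; rw [ha]; exact hk)
  · rw [lie_neg, d.lie_F_F_of_ne_of_eq (by rw [hq]; exact hp₁.symm) rfl, neg_neg,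
      add_sub_cancel_right]
  · rw [d.lie_F_F_of_ne_of_eq (by rw [ha]; exact hp₀.symm) rfl, add_sub_cancel_right]
  · rw [lie_neg, d.lie_F_F_of_ne_of_ne (by rw [ha]; exact hp₀.symm)
      (by push_cast; rw [ha]; exact hk.symm), neg_zero]

theorem Taff_F_of_fst_eq_of_snd_eq (hp : (p : ZMod N) = k + 1) (hq : (q : ZMod N) = k) :
    Taff d k (d.F p q) = -d.F (p - 1) (q + 1) := by
  obtain ⟨a, rfl⟩ : ∃ a, p = a + 1 := ⟨p - 1, by ring⟩
  have ha : (a : ZMod N) = k := by push_cast at hp; exact add_right_cancel hp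
  have hqa : (q : ZMod N) = a := hq.trans ha.symm
  have hk : ((a + 1 : ℤ) : ZMod N) ≠ a := by push_cast; exact add_ne_left.mpr one_ne_zero
  have hk' : ((q + 1 : ℤ) : ZMod N) ≠ a := by push_cast [hqa]; exact_mod_cast hk
  rw [Taff_eq_adBraid d ha, add_sub_cancel_right]
  set z : L := if a + (a + 1) = a + 1 + q then
    (((a + 1 - 1) / N - (a - 1) / N : ℤ) : ℂ) • d.c else 0 with hz_def
  have hz : ∀ y : L, ⁅y, z⁆ = 0 := by
    intro y
    rw [hz_def]
    split_ifs <;> simp [lie_c]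
  have hz' : (if a + 1 + a = a + (q + 1) then
      (((a - 1) / N - (a + 1 - 1) / N : ℤ) : ℂ) • d.c else 0) = -z := by
    rw [hz_def]
    split_ifs <;> first | omega | (push_cast; module)
  refine adBraid_of_doublet_tensor (x₁₁ := d.F a q) (x₂₂ := d.F (a + 1) (q + 1)) hz
    ?_ ?_ ?_ ?_ ?_ ?_ ?_ ?_
  · rw [d.lie_F_F_of_ne_of_eq hk hqa, show a + 1 + q - a = q + 1 by ring]
  · exact d.lie_F_F_of_ne_of_ne hk hk'
  · rw [d.lie_F_F_of_eq_of_eq rfl hqa, ← hz_def, show q + (a + 1) - (a + 1) = q by ring,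
      show a + 1 + q - a = q + 1 by ring]
  · rw [d.lie_F_F_of_eq_of_ne rfl hk', show q + 1 + (a + 1) - (a + 1) = q + 1 by ring]
  · rw [d.lie_F_F_of_eq_of_ne rfl (by rw [hqa]; exact hk.symm), show q + a - a = q by ring]
  · rw [d.lie_F_F_of_eq_of_eq rfl (by push_cast [hqa]; rfl), hz',
      show q + 1 + a - a = q + 1 by ring, show a + (q + 1) - (a + 1) = q by ring,
      sub_eq_add_neg _ z]
  · exact d.lie_F_F_of_ne_of_ne hk.symm (by rw [hqa]; exact hk.symm)
  · rw [d.lie_F_F_of_ne_of_eq hk.symm (by push_cast; rw [hqa]),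
      show a + (q + 1) - (a + 1) = q by ring]

end AffineGLData

theorem ne_of_sub_eq_natCast {a b : ZMod N} {n : ℕ} (h : b - a = n) (h₀ : 0 < n) (hn : n < N) :
    a ≠ b := by
  rintro rfl
  rw [sub_self, eq_comm, ZMod.natCast_eq_zero_iff] at h
  exact absurd (Nat.le_of_dvd h₀ h) (by omega)

theorem tailWord_eq (N : ℕ) (i : ZMod N) :
    tailWord N i = (List.range (N - 2)).map fun k : ℕ => i + k + 1 :=
  (congrArg _ (List.flatMap_pure_eq_map _ _)).trans (List.map_map ..)

theorem tWord_eq (N : ℕ) (i : ZMod N) : tWord N i = tailWord N i ++ [i - 1, i, i - 1] ++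
    ((List.range (N - 3)).map fun k : ℕ => i + k + 2).reverse :=
  congrArg (fun l => _ ++ (List.map _ l).reverse) (List.flatMap_pure_eq_map _ _) |>.trans
    (congrArg (fun l => _ ++ l.reverse) (List.map_map ..))

section Words

variable (d : AffineGLData N L)

theorem TaffComp_nil (A : L) : TaffComp d [] A = A := rfl

theorem TaffComp_cons (k : ZMod N) (ks : List (ZMod N)) (A : L) :
    TaffComp d (k :: ks) A = Taff d k (TaffComp d ks A) := rfl

theorem TaffComp_append (l₁ l₂ : List (ZMod N)) (A : L) :
    TaffComp d (l₁ ++ l₂) A = TaffComp d l₁ (TaffComp d l₂ A) :=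
  List.foldr_append

theorem TaffComp_smul (ks : List (ZMod N)) (r : ℂ) (A : L) :
    TaffComp d ks (r • A) = r • TaffComp d ks A := by
  induction ks with
  | nil => rfl
  | cons k ks ih => rw [TaffComp_cons, TaffComp_cons, ih]; exact adBraid_smul _ _ r _

theorem TaffComp_neg (ks : List (ZMod N)) (A : L) : TaffComp d ks (-A) = -TaffComp d ks A := by
  simpa using TaffComp_smul d ks (-1) A

theorem TaffComp_eq_self {ks : List (ZMod N)} {A : L} (h : ∀ k ∈ ks, Taff d k A = A) :
    TaffComp d ks A = A := by
  induction ks with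
  | nil => rfl
  | cons k ks ih =>
    rw [TaffComp_cons, ih fun k' hk' => h k' (List.mem_cons_of_mem k hk'), h k List.mem_cons_self]

variable [NeZero N] [Nontrivial (ZMod N)] (i : ZMod N) {p q : ℤ}

theorem TaffComp_range_F {n : ℕ} (hn : n + 2 ≤ N) (hp : (p : ZMod N) = i + 1 + n)
    (hq : (q : ZMod N) = i) :
    TaffComp d ((List.range n).map fun k : ℕ => i + k + 1) (d.F p q) = d.F (p - n) q := by
  induction n generalizing p with
  | zero => simp [TaffComp_nil]
  | succ n ih =>
    have hq₀ : (q : ZMod N) ≠ i + n + 1 :=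
      hq ▸ ne_of_sub_eq_natCast (n := n + 1) (by push_cast; ring) (by omega) (by omega)
    have hq₁ : (q : ZMod N) ≠ i + n + 1 + 1 :=
      hq ▸ ne_of_sub_eq_natCast (n := n + 2) (by push_cast; ring) (by omega) (by omega)
    rw [List.range_succ, List.map_append, TaffComp_append, List.map_singleton, TaffComp_cons,
      TaffComp_nil, d.Taff_F_of_fst_eq (by rw [hp]; push_cast; ring) hq₀ hq₁,
      ih (by omega) (by push_cast [hp]; ring)]
    congr 1
    push_cast
    ring

theorem TaffComp_tWord_F (hN : 3 ≤ N) (hp : (p : ZMod N) = i + 1) (hq : (q : ZMod N) = i) :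
    TaffComp d (tWord N i) (d.F p q) = -d.F (p - N) q := by
  have hne {a b : ZMod N} (n : ℕ) (h : b - a = n) (h₀ : 0 < n := by omega)
      (hn : n < N := by omega) : a ≠ b := ne_of_sub_eq_natCast h h₀ hn
  have hfix : TaffComp d ((List.range (N - 3)).map fun k : ℕ => i + k + 2).reverse (d.F p q) =
      d.F p q := by
    refine TaffComp_eq_self d fun k hk => ?_
    obtain ⟨n, hn, rfl⟩ := List.mem_map.mp (List.mem_reverse.mp hk)
    rw [List.mem_range] at hn
    refine d.Taff_F_of_ne (hne (n + 1) ?_) (hne (n + 2) ?_) (hne (n + 2) ?_) (hne (n + 3) ?_) <;>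
      (push_cast [hp, hq]; ring)
  rw [tWord_eq, TaffComp_append, TaffComp_append, hfix, TaffComp_cons, TaffComp_cons,
    TaffComp_cons, TaffComp_nil,
    d.Taff_F_of_snd_eq ((hne 2 (by rw [hp]; ring)).symm) ((hne 1 (by rw [hp]; ring)).symm)
      (by rw [hq]; ring),
    d.Taff_F_of_fst_eq hp (by push_cast [hq]; exact hne 1 (by ring))
      (by push_cast [hq]; exact hne 2 (by ring)),
    d.Taff_F_of_fst_eq_of_snd_eq (by push_cast [hp]; ring) (by push_cast [hq]; ring),
    TaffComp_neg, tailWord_eq, TaffComp_range_F d i (n := N - 2) (by omega)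
      (by push_cast [hp, Nat.cast_sub (show 2 ≤ N by omega), ZMod.natCast_self]; ring)
      (by push_cast [hq]; ring)]
  congr 2
  · push_cast [Nat.cast_sub (show 2 ≤ N by omega)]
    ring
  · ring

theorem TaffComp_replicate_tWord_F (hN : 3 ≤ N) (m : ℕ) (hp : (p : ZMod N) = i + 1)
    (hq : (q : ZMod N) = i) :
    TaffComp d (List.replicate m (tWord N i)).flatten (d.F p q) =
      (-1 : ℂ) ^ m • d.F (p - m * N) q := by
  induction m with
  | zero => simp [TaffComp_nil]
  | succ m ih =>
    rw [List.replicate_succ, List.flatten_cons, TaffComp_append, ih, TaffComp_smul,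
      TaffComp_tWord_F d i hN (by push_cast [hp]; simp) hq, pow_succ, mul_neg_one, neg_smul,
      ← smul_neg]
    congr 3
    push_cast
    ring

end Words

theorem AffineGLData.F_val_add_one_sub_mul [NeZero N] (d : AffineGLData N L) (i : ZMod N)
    (m : ℤ) : d.F ((i.val : ℤ) + 1 - m * N) i.val = d.E (i + 1) i (m - if i = 0 then 1 else 0) := by
  have hN : (N : ℤ) ≠ 0 := by exact_mod_cast NeZero.ne N
  have hdeg := ediv_sub_sub_one_ediv (N := N) i.val
  simp only [Int.cast_natCast, ZMod.natCast_zmod_val] at hdeg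
  rw [AffineGLData.F, show (i.val : ℤ) + 1 - m * N - 1 = i.val + (-m) * N by ring,
    Int.add_mul_ediv_right _ _ hN]
  congr 1
  · simp
  · simp
  · linear_combination -hdeg

theorem stmt15_general (N : ℕ) (hN : 3 ≤ N) (L : Type) [LieRing L] [LieAlgebra ℂ L]
    (d : AffineGLData N L) (i : ZMod N) (m : ℕ) (hm : 1 ≤ m) :
    TaffComp d (wWord N i m) (xp d (i - 1)) =
      ((-1 : ℂ)) ^ (m - 1) •
        (if i = 0 then d.E 1 0 ((m : ℤ) - 1) else d.E (i + 1) i (m : ℤ)) := by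
  have : Fact (1 < N) := ⟨by omega⟩
  have hN₂ : ((N - 2 : ℕ) : ZMod N) = -2 := by simp [Nat.cast_sub (show 2 ≤ N by omega)]
  have ha : (((i.val : ℤ) - 1 : ℤ) : ZMod N) = i - 1 := by simp
  have hp : (((i.val : ℤ) - 1 : ℤ) : ZMod N) = i + 1 + ((N - 2 : ℕ) : ZMod N) := by
    rw [ha, hN₂]; ring
  have hp' : (((i.val : ℤ) - 1 - ((N - 2 : ℕ) : ℤ) : ℤ) : ZMod N) = i + 1 := by
    push_cast [ha, hN₂]; ring
  have hq : ((i.val : ℤ) : ZMod N) = i := by simp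
  rw [wWord, TaffComp_append, d.xp_eq_F ha, sub_add_cancel, tailWord_eq,
    TaffComp_range_F d i (by omega) hp hq, TaffComp_replicate_tWord_F d i hN (m - 1) hp' hq,
    show (i.val : ℤ) - 1 - ((N - 2 : ℕ) : ℤ) - ((m - 1 : ℕ) : ℤ) * N = i.val + 1 - m * N by
      push_cast [Nat.cast_sub hm, Nat.cast_sub (show 2 ≤ N by omega)]; ring,
    d.F_val_add_one_sub_mul]
  split_ifs with hi
  · subst hi
    simp
  · simp

theorem stmt15 (N : ℕ) [NeZero N] (hN : 3 ≤ N) (L : Type) [LieRing L] [LieAlgebra ℂ L]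
    (d : AffineGLData N L) (i : ZMod N) (m : ℕ) (hm : 1 ≤ m) :
    TaffComp d (wWord N i m) (xp d (i - 1)) =
      ((-1 : ℂ)) ^ (m - 1) •
        (if i = 0 then d.E 1 0 ((m : ℤ) - 1) else d.E (i + 1) i (m : ℤ)) :=
  stmt15_general N hN L d i m hm
end
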